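/- arXiv:1911.07507 — 5 statements merged into one kernel-verified Lean document; each statement's English description precedes it below -/
import Mathlib

section
/- For u ∈ H = ℓ²(ℂ) and v ∈ V = D(A^{1/2}), the sabra shell model bilinear operator satisfies |B(u,v)| ≤ C₁ |u| ‖v‖ with C₁ = |a|(λ^{-1}+λ) + |b|(λ^{-1}+1). -/
/-!
Each term of `B(u,v)ₙ` is a product `k_m v_j · u_l` with `|m - j| ≤ 1`, so
`|k_m v_j| = λ^(m-j) |k_j v_j| ≤ λ^(m-j) ‖v‖` bounds it by `‖v‖` times a multiple of a shifted
`|u_l|`. Hence `|B(u,v)ₙ|` is dominated by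
`‖v‖ (|a| λ⁻¹ |u_{n+1}| + (|b| λ⁻¹ + |a| λ) |u_{n-1}| + |b| |u_{n-2}|)`, and Minkowski's
inequality in `ℓ²`, together with the shift invariance of the `ℓ²` norm, gives the constant `C₁`.
-/

open scoped BigOperators

/-- Wave numbers `kₙ = k₀ λⁿ`. -/
noncomputable def kk (k0 lam : ℝ) (n : ℤ) : ℝ := k0 * lam ^ n

/-- The sabra shell model bilinear operator `B(u,v)ₙ`. -/
noncomputable def sabraB (a b k0 lam : ℝ) (u v : ℤ → ℂ) (n : ℤ) : ℂ :=
  if 1 ≤ n then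
    -Complex.I *
      ((a : ℂ) * (kk k0 lam (n + 1) : ℂ) * v (n + 2) * (starRingEnd ℂ) (u (n + 1))
        + (b : ℂ) * (kk k0 lam n : ℂ) * v (n + 1) * (starRingEnd ℂ) (u (n - 1))
        + (a : ℂ) * (kk k0 lam (n - 1) : ℂ) * u (n - 1) * v (n - 2)
        + (b : ℂ) * (kk k0 lam (n - 1) : ℂ) * v (n - 1) * u (n - 2))
  else 0

section SqrtTsumSq

variable {ι : Type*} {f g : ι → ℝ}

theorem abs_le_sqrt_tsum_sq (hf : Summable fun i => f i ^ 2) (i : ι) :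
    |f i| ≤ √(∑' j, f j ^ 2) :=
  Real.abs_le_sqrt (hf.le_tsum i fun j _ => sq_nonneg (f j))

theorem summable_sq_and_sqrt_tsum_sq_le_of_le (hf : ∀ i, 0 ≤ f i) (hfg : ∀ i, f i ≤ g i)
    (hg : Summable fun i => g i ^ 2) :
    Summable (fun i => f i ^ 2) ∧ √(∑' i, f i ^ 2) ≤ √(∑' i, g i ^ 2) := by
  have hsq : ∀ i, f i ^ 2 ≤ g i ^ 2 := fun i => pow_le_pow_left₀ (hf i) (hfg i) 2
  have hfs : Summable fun i => f i ^ 2 := hg.of_nonneg_of_le (fun i => sq_nonneg _) hsq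
  exact ⟨hfs, Real.sqrt_le_sqrt (hfs.tsum_le_tsum hsq hg)⟩

theorem summable_sq_add_and_sqrt_tsum_sq_add_le (hf0 : ∀ i, 0 ≤ f i) (hg0 : ∀ i, 0 ≤ g i)
    (hf : Summable fun i => f i ^ 2) (hg : Summable fun i => g i ^ 2) :
    Summable (fun i => (f i + g i) ^ 2) ∧
      √(∑' i, (f i + g i) ^ 2) ≤ √(∑' i, f i ^ 2) + √(∑' i, g i ^ 2) := by
  simp only [← Real.rpow_two, Real.sqrt_eq_rpow] at hf hg ⊢
  exact Real.Lp_add_le_tsum_of_nonneg one_le_two hf0 hg0 hf hg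

theorem summable_sq_and_sqrt_tsum_sq_const_mul_norm_comp {E : Type*} [SeminormedAddCommGroup E]
    {u : ι → E} (hu : Summable fun i => ‖u i‖ ^ 2) (e : ι ≃ ι) {c : ℝ} (hc : 0 ≤ c) :
    Summable (fun i => (c * ‖u (e i)‖) ^ 2) ∧
      √(∑' i, (c * ‖u (e i)‖) ^ 2) = c * √(∑' i, ‖u i‖ ^ 2) := by
  simp only [mul_pow]
  refine ⟨(e.summable_iff.mpr hu).mul_left _, ?_⟩
  rw [tsum_mul_left, e.tsum_eq (fun i => ‖u i‖ ^ 2), Real.sqrt_mul (sq_nonneg c),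
    Real.sqrt_sq hc]

end SqrtTsumSq

theorem kk_eq_zpow_mul_kk {lam : ℝ} (hlam : lam ≠ 0) (k0 : ℝ) (m j : ℤ) :
    kk k0 lam m = lam ^ (m - j) * kk k0 lam j := by
  rw [kk, kk, mul_left_comm, ← zpow_add₀ hlam, sub_add_cancel]

section PointwiseBound

variable {a b k0 lam M : ℝ} {v : ℤ → ℂ}

theorem abs_kk_mul_norm_le (hlam : 0 < lam) (hM : ∀ m, |kk k0 lam m| * ‖v m‖ ≤ M) (m j : ℤ) :
    |kk k0 lam m| * ‖v j‖ ≤ lam ^ (m - j) * M := by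
  rw [kk_eq_zpow_mul_kk hlam.ne' k0 m j, abs_mul, abs_of_pos (zpow_pos hlam _), mul_assoc]
  exact mul_le_mul_of_nonneg_left (hM j) (zpow_pos hlam _).le

theorem norm_sabraB_le (hlam : 0 < lam) (hM : ∀ m, |kk k0 lam m| * ‖v m‖ ≤ M) (u : ℤ → ℂ)
    (n : ℤ) :
    ‖sabraB a b k0 lam u v n‖ ≤
      |a| * lam⁻¹ * M * ‖u (n + 1)‖ + (|b| * lam⁻¹ + |a| * lam) * M * ‖u (n - 1)‖
        + |b| * M * ‖u (n - 2)‖ := by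
  have hM0 : 0 ≤ M := (mul_nonneg (abs_nonneg _) (norm_nonneg _)).trans (hM 0)
  have hw := abs_kk_mul_norm_le hlam hM
  unfold sabraB
  split_ifs with hn
  · have t1 := hw (n + 1) (n + 2)
    have t2 := hw n (n + 1)
    have t3 := hw (n - 1) (n - 2)
    have t4 := hw (n - 1) (n - 1)
    simp only [show n + 1 - (n + 2) = -1 by ring, show n - (n + 1) = -1 by ring,
      show n - 1 - (n - 2) = 1 by ring, sub_self, zpow_neg_one, zpow_one, zpow_zero] at t1 t2 t3 t4
    rw [norm_mul, norm_neg, Complex.norm_I, one_mul]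
    calc _ ≤ _ := norm_add₄_le
      _ = |a| * (|kk k0 lam (n + 1)| * ‖v (n + 2)‖) * ‖u (n + 1)‖
            + |b| * (|kk k0 lam n| * ‖v (n + 1)‖) * ‖u (n - 1)‖
            + |a| * (|kk k0 lam (n - 1)| * ‖v (n - 2)‖) * ‖u (n - 1)‖
            + |b| * (|kk k0 lam (n - 1)| * ‖v (n - 1)‖) * ‖u (n - 2)‖ := by
        simp only [norm_mul, Complex.norm_real, Real.norm_eq_abs, RCLike.norm_conj]
        ring
      _ ≤ |a| * (lam⁻¹ * M) * ‖u (n + 1)‖ + |b| * (lam⁻¹ * M) * ‖u (n - 1)‖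
            + |a| * (lam * M) * ‖u (n - 1)‖ + |b| * (1 * M) * ‖u (n - 2)‖ := by
        gcongr
      _ = _ := by ring
  · rw [norm_zero]
    positivity

end PointwiseBound

theorem sabraB_H_V_bound_general (a b k0 lam : ℝ) (hlam : 1 < lam)
    (u v : ℤ → ℂ)
    (hu : Summable fun n : ℤ => ‖u n‖ ^ 2)
    (hv : Summable fun n : ℤ => (kk k0 lam n) ^ 2 * ‖v n‖ ^ 2) :
    Summable (fun n : ℤ => ‖sabraB a b k0 lam u v n‖ ^ 2) ∧
      Real.sqrt (∑' n : ℤ, ‖sabraB a b k0 lam u v n‖ ^ 2) ≤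
        (|a| * (lam⁻¹ + lam) + |b| * (lam⁻¹ + 1)) *
          Real.sqrt (∑' n : ℤ, ‖u n‖ ^ 2) *
          Real.sqrt (∑' n : ℤ, (kk k0 lam n) ^ 2 * ‖v n‖ ^ 2) := by
  have hlam0 : 0 < lam := one_pos.trans hlam
  set Sv := √(∑' n : ℤ, (kk k0 lam n) ^ 2 * ‖v n‖ ^ 2)
  have hSv : ∀ m, |kk k0 lam m| * ‖v m‖ ≤ Sv := by
    intro m
    have hv' : Summable fun n => (kk k0 lam n * ‖v n‖) ^ 2 := by simpa only [mul_pow] using hv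
    simpa only [mul_pow, abs_mul, abs_norm] using abs_le_sqrt_tsum_sq hv' m
  have hSv0 : 0 ≤ Sv := Real.sqrt_nonneg _
  obtain ⟨h1, e1⟩ := summable_sq_and_sqrt_tsum_sq_const_mul_norm_comp hu (Equiv.addRight 1)
    (c := |a| * lam⁻¹ * Sv) (by positivity)
  obtain ⟨h2, e2⟩ := summable_sq_and_sqrt_tsum_sq_const_mul_norm_comp hu (Equiv.subRight 1)
    (c := (|b| * lam⁻¹ + |a| * lam) * Sv) (by positivity)
  obtain ⟨h3, e3⟩ := summable_sq_and_sqrt_tsum_sq_const_mul_norm_comp hu (Equiv.subRight 2)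
    (c := |b| * Sv) (by positivity)
  obtain ⟨h12, m12⟩ := summable_sq_add_and_sqrt_tsum_sq_add_le
    (fun n => by positivity) (fun n => by positivity) h1 h2
  obtain ⟨h123, m123⟩ := summable_sq_add_and_sqrt_tsum_sq_add_le
    (fun n => by positivity) (fun n => by positivity) h12 h3
  obtain ⟨hB, hBle⟩ := summable_sq_and_sqrt_tsum_sq_le_of_le (fun n => norm_nonneg _)
    (norm_sabraB_le hlam0 hSv u) h123
  refine ⟨hB, hBle.trans ((m123.trans (add_le_add m12 le_rfl)).trans_eq ?_)⟩
  rw [e1, e2, e3]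
  ring

/-- for `u ∈ H`, `v ∈ V`, `|B(u,v)| ≤ C₁ |u| ‖v‖` with
`C₁ = |a|(λ⁻¹+λ) + |b|(λ⁻¹+1)`. -/
theorem sabraB_H_V_bound (a b k0 lam : ℝ) (hk0 : 0 < k0) (hlam : 1 < lam)
    (u v : ℤ → ℂ) (hu0 : ∀ n : ℤ, n ≤ 0 → u n = 0) (hv0 : ∀ n : ℤ, n ≤ 0 → v n = 0)
    (hu : Summable fun n : ℤ => ‖u n‖ ^ 2)
    (hv : Summable fun n : ℤ => (kk k0 lam n) ^ 2 * ‖v n‖ ^ 2) :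
    Summable (fun n : ℤ => ‖sabraB a b k0 lam u v n‖ ^ 2) ∧
      Real.sqrt (∑' n : ℤ, ‖sabraB a b k0 lam u v n‖ ^ 2) ≤
        (|a| * (lam⁻¹ + lam) + |b| * (lam⁻¹ + 1)) *
          Real.sqrt (∑' n : ℤ, ‖u n‖ ^ 2) *
          Real.sqrt (∑' n : ℤ, (kk k0 lam n) ^ 2 * ‖v n‖ ^ 2) :=
  sabraB_H_V_bound_general a b k0 lam hlam u v hu hv
end

section
/- For u ∈ V and v ∈ H, the sabra shell model bilinear operator satisfies |B(u,v)| ≤ C₂ |v| ‖u‖ with C₂ = 2|a| + 2λ|b|. -/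
open scoped BigOperators

set_option maxHeartbeats 1600000 in
/-- for `u ∈ V`, `v ∈ H`, `|B(u,v)| ≤ C₂ |v| ‖u‖` with `C₂ = 2|a| + 2λ|b|`. -/
theorem sabraB_V_H_bound (a b k0 lam : ℝ) (hk0 : 0 < k0) (hlam : 1 < lam)
    (u v : ℤ → ℂ) (hu0 : ∀ n : ℤ, n ≤ 0 → u n = 0) (hv0 : ∀ n : ℤ, n ≤ 0 → v n = 0)
    (hu : Summable fun n : ℤ => (kk k0 lam n) ^ 2 * ‖u n‖ ^ 2)
    (hv : Summable fun n : ℤ => ‖v n‖ ^ 2) :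
    Summable (fun n : ℤ => ‖sabraB a b k0 lam u v n‖ ^ 2) ∧
      Real.sqrt (∑' n : ℤ, ‖sabraB a b k0 lam u v n‖ ^ 2) ≤
        (2 * |a| + 2 * lam * |b|) *
          Real.sqrt (∑' n : ℤ, ‖v n‖ ^ 2) *
          Real.sqrt (∑' n : ℤ, (kk k0 lam n) ^ 2 * ‖u n‖ ^ 2) := by
  have hlam0 : (0:ℝ) < lam := lt_trans one_pos hlam
  have hK : ∀ n : ℤ, 0 < kk k0 lam n := fun n => mul_pos hk0 (zpow_pos hlam0 n)
  have hKlam : ∀ n : ℤ, kk k0 lam n = lam * kk k0 lam (n - 1) := by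
    intro n
    have h1 : lam ^ n = lam ^ (n - 1) * lam := by
      conv_lhs => rw [show n = n - 1 + 1 by ring]
      exact zpow_add_one₀ (ne_of_gt hlam0) _
    unfold kk
    rw [h1]
    ring
  set g : ℤ → ℝ := fun n => (kk k0 lam n) ^ 2 * ‖u n‖ ^ 2 with hgdef
  set h : ℤ → ℝ := fun n => ‖v n‖ ^ 2 with hhdef
  have hgnn : ∀ n, 0 ≤ g n := fun n => mul_nonneg (sq_nonneg _) (sq_nonneg _)
  have hhnn : ∀ n, 0 ≤ h n := fun n => sq_nonneg _
  set M := ∑' n, h n with hMdef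
  set U := ∑' n, g n with hUdef
  have hMnn : 0 ≤ M := tsum_nonneg hhnn
  have hUnn : 0 ≤ U := tsum_nonneg hgnn
  have hhM : ∀ p, h p ≤ M := fun p => Summable.le_tsum hv p (fun j _ => hhnn j)
  set ca := |a| with hcadef
  set cb := lam * |b| with hcbdef
  have hca : 0 ≤ ca := abs_nonneg a
  have hcb : 0 ≤ cb := mul_nonneg hlam0.le (abs_nonneg b)
  set C := 2 * |a| + 2 * lam * |b| with hCdef
  have hCc : C = ca + cb + (ca + cb) := by rw [hCdef, hcadef, hcbdef]; ring
  have hCnn : 0 ≤ C := by rw [hCc]; linarith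
  have hgshift : ∀ c : ℤ, Summable (fun n => g (n + c)) := fun c =>
    ((Equiv.addRight c).summable_iff).2 hu
  have hgshift_tsum : ∀ c : ℤ, ∑' n, g (n + c) = U := fun c =>
    (Equiv.addRight c).tsum_eq g
  have key : ∀ (c : ℝ), 0 ≤ c → ∀ (σ τ : ℤ),
      Summable (fun n => c * (g (n + σ) * h (n + τ))) ∧
        ∑' n, c * (g (n + σ) * h (n + τ)) ≤ c * M * U := by
    intro c hc σ τ
    have hle : ∀ n : ℤ, c * (g (n + σ) * h (n + τ)) ≤ (c * M) * g (n + σ) := by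
      intro n
      have h1 : g (n + σ) * h (n + τ) ≤ g (n + σ) * M :=
        mul_le_mul_of_nonneg_left (hhM _) (hgnn _)
      calc c * (g (n + σ) * h (n + τ)) ≤ c * (g (n + σ) * M) :=
            mul_le_mul_of_nonneg_left h1 hc
        _ = (c * M) * g (n + σ) := by ring
    have hnn : ∀ n, 0 ≤ c * (g (n + σ) * h (n + τ)) := fun n =>
      mul_nonneg hc (mul_nonneg (hgnn _) (hhnn _))
    have hsum2 : Summable (fun n => (c * M) * g (n + σ)) := (hgshift σ).mul_left _
    have hsum1 : Summable (fun n => c * (g (n + σ) * h (n + τ))) :=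
      Summable.of_nonneg_of_le hnn hle hsum2
    refine ⟨hsum1, ?_⟩
    calc ∑' n, c * (g (n + σ) * h (n + τ)) ≤ ∑' n, (c * M) * g (n + σ) :=
          Summable.tsum_le_tsum hle hsum1 hsum2
      _ = (c * M) * ∑' n, g (n + σ) := tsum_mul_left
      _ = c * M * U := by rw [hgshift_tsum σ]
  set R : ℤ → ℝ := fun n =>
    (ca * (g (n + 1) * h (n + 2)) + cb * (g (n + (-1)) * h (n + 1))) +
      (ca * (g (n + (-1)) * h (n + (-2))) + cb * (g (n + (-2)) * h (n + (-1)))) with hRdef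
  have hRnn : ∀ n, 0 ≤ R n := by
    intro n
    have h1 : 0 ≤ ca * (g (n + 1) * h (n + 2)) :=
      mul_nonneg hca (mul_nonneg (hgnn _) (hhnn _))
    have h2 : 0 ≤ cb * (g (n + (-1)) * h (n + 1)) :=
      mul_nonneg hcb (mul_nonneg (hgnn _) (hhnn _))
    have h3 : 0 ≤ ca * (g (n + (-1)) * h (n + (-2))) :=
      mul_nonneg hca (mul_nonneg (hgnn _) (hhnn _))
    have h4 : 0 ≤ cb * (g (n + (-2)) * h (n + (-1))) :=
      mul_nonneg hcb (mul_nonneg (hgnn _) (hhnn _))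
    simp only [hRdef]
    linarith
  have hpt : ∀ n : ℤ, ‖sabraB a b k0 lam u v n‖ ^ 2 ≤ C * R n := by
    intro n
    by_cases hn : 1 ≤ n
    · have hsub : ∀ m : ℤ, (m : ℤ) + (-1) = m - 1 := fun m => by ring
      set X1 := kk k0 lam (n + 1) * ‖u (n + 1)‖ * ‖v (n + 2)‖ with hX1
      set X2 := kk k0 lam (n - 1) * ‖u (n - 1)‖ * ‖v (n + 1)‖ with hX2
      set X3 := kk k0 lam (n - 1) * ‖u (n - 1)‖ * ‖v (n - 2)‖ with hX3
      set X4 := kk k0 lam (n - 2) * ‖u (n - 2)‖ * ‖v (n - 1)‖ with hX4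
      have hX1sq : X1 ^ 2 = g (n + 1) * h (n + 2) := by
        simp only [hX1, hgdef, hhdef]; ring
      have hX2sq : X2 ^ 2 = g (n + (-1)) * h (n + 1) := by
        simp only [hX2, hgdef, hhdef, show n + (-1 : ℤ) = n - 1 by ring]; ring
      have hX3sq : X3 ^ 2 = g (n + (-1)) * h (n + (-2)) := by
        simp only [hX3, hgdef, hhdef, show n + (-1 : ℤ) = n - 1 by ring,
          show n + (-2 : ℤ) = n - 2 by ring]; ring
      have hX4sq : X4 ^ 2 = g (n + (-2)) * h (n + (-1)) := by
        simp only [hX4, hgdef, hhdef, show n + (-1 : ℤ) = n - 1 by ring,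
          show n + (-2 : ℤ) = n - 2 by ring]; ring
      have hX1nn : 0 ≤ X1 := mul_nonneg (mul_nonneg (hK _).le (norm_nonneg _)) (norm_nonneg _)
      have hX2nn : 0 ≤ X2 := mul_nonneg (mul_nonneg (hK _).le (norm_nonneg _)) (norm_nonneg _)
      have hX3nn : 0 ≤ X3 := mul_nonneg (mul_nonneg (hK _).le (norm_nonneg _)) (norm_nonneg _)
      have hX4nn : 0 ≤ X4 := mul_nonneg (mul_nonneg (hK _).le (norm_nonneg _)) (norm_nonneg _)
      have hn1 : ‖(a : ℂ) * (kk k0 lam (n + 1) : ℂ) * v (n + 2) * (starRingEnd ℂ) (u (n + 1))‖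
          = ca * X1 := by
        simp only [norm_mul, Complex.norm_real, Real.norm_eq_abs, RCLike.norm_conj,
          abs_of_pos (hK _), hcadef, hX1]
        ring
      have hn2 : ‖(b : ℂ) * (kk k0 lam n : ℂ) * v (n + 1) * (starRingEnd ℂ) (u (n - 1))‖
          = cb * X2 := by
        simp only [norm_mul, Complex.norm_real, Real.norm_eq_abs, RCLike.norm_conj,
          abs_of_pos (hK _), hcbdef, hX2]
        rw [hKlam n]; ring
      have hn3 : ‖(a : ℂ) * (kk k0 lam (n - 1) : ℂ) * u (n - 1) * v (n - 2)‖
          = ca * X3 := by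
        simp only [norm_mul, Complex.norm_real, Real.norm_eq_abs,
          abs_of_pos (hK _), hcadef, hX3]
        ring
      have hn4 : ‖(b : ℂ) * (kk k0 lam (n - 1) : ℂ) * v (n - 1) * u (n - 2)‖
          = cb * X4 := by
        simp only [norm_mul, Complex.norm_real, Real.norm_eq_abs,
          abs_of_pos (hK _), hcbdef, hX4]
        rw [hKlam (n-1), show n - 1 - 1 = n - 2 by ring]; ring
      have hBn : ‖sabraB a b k0 lam u v n‖ ≤ ca * X1 + cb * X2 + ca * X3 + cb * X4 := by
        rw [sabraB, if_pos hn, norm_mul]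
        have hI : ‖-Complex.I‖ = 1 := by simp
        rw [hI, one_mul]
        calc ‖(a : ℂ) * (kk k0 lam (n + 1) : ℂ) * v (n + 2) * (starRingEnd ℂ) (u (n + 1))
              + (b : ℂ) * (kk k0 lam n : ℂ) * v (n + 1) * (starRingEnd ℂ) (u (n - 1))
              + (a : ℂ) * (kk k0 lam (n - 1) : ℂ) * u (n - 1) * v (n - 2)
              + (b : ℂ) * (kk k0 lam (n - 1) : ℂ) * v (n - 1) * u (n - 2)‖
            ≤ ‖(a : ℂ) * (kk k0 lam (n + 1) : ℂ) * v (n + 2) * (starRingEnd ℂ) (u (n + 1))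
              + (b : ℂ) * (kk k0 lam n : ℂ) * v (n + 1) * (starRingEnd ℂ) (u (n - 1))
              + (a : ℂ) * (kk k0 lam (n - 1) : ℂ) * u (n - 1) * v (n - 2)‖
              + ‖(b : ℂ) * (kk k0 lam (n - 1) : ℂ) * v (n - 1) * u (n - 2)‖ := norm_add_le _ _
          _ ≤ (‖(a : ℂ) * (kk k0 lam (n + 1) : ℂ) * v (n + 2) * (starRingEnd ℂ) (u (n + 1))
              + (b : ℂ) * (kk k0 lam n : ℂ) * v (n + 1) * (starRingEnd ℂ) (u (n - 1))‖
              + ‖(a : ℂ) * (kk k0 lam (n - 1) : ℂ) * u (n - 1) * v (n - 2)‖)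
              + ‖(b : ℂ) * (kk k0 lam (n - 1) : ℂ) * v (n - 1) * u (n - 2)‖ := by
                gcongr
                exact norm_add_le _ _
          _ ≤ ((‖(a : ℂ) * (kk k0 lam (n + 1) : ℂ) * v (n + 2) * (starRingEnd ℂ) (u (n + 1))‖
              + ‖(b : ℂ) * (kk k0 lam n : ℂ) * v (n + 1) * (starRingEnd ℂ) (u (n - 1))‖)
              + ‖(a : ℂ) * (kk k0 lam (n - 1) : ℂ) * u (n - 1) * v (n - 2)‖)
              + ‖(b : ℂ) * (kk k0 lam (n - 1) : ℂ) * v (n - 1) * u (n - 2)‖ := by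
                gcongr
                exact norm_add_le _ _
          _ = ca * X1 + cb * X2 + ca * X3 + cb * X4 := by rw [hn1, hn2, hn3, hn4]
      have hB2 : ‖sabraB a b k0 lam u v n‖ ^ 2 ≤ (ca * X1 + cb * X2 + ca * X3 + cb * X4) ^ 2 :=
        pow_le_pow_left₀ (norm_nonneg _) hBn 2
      have hRn : R n = ca * X1 ^ 2 + cb * X2 ^ 2 + (ca * X3 ^ 2 + cb * X4 ^ 2) := by
        simp only [hRdef, hX1sq, hX2sq, hX3sq, hX4sq]
      rw [hCc, hRn]
      have hiden : (ca + cb + (ca + cb)) *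
          (ca * X1 ^ 2 + cb * X2 ^ 2 + (ca * X3 ^ 2 + cb * X4 ^ 2)) =
          (ca * X1 + cb * X2 + ca * X3 + cb * X4) ^ 2 +
            (ca * cb * (X1 - X2) ^ 2 + ca * ca * (X1 - X3) ^ 2 +
              ca * cb * (X1 - X4) ^ 2 + cb * ca * (X2 - X3) ^ 2 +
              cb * cb * (X2 - X4) ^ 2 + ca * cb * (X3 - X4) ^ 2) := by ring
      have t1 : 0 ≤ ca * cb * (X1 - X2) ^ 2 := mul_nonneg (mul_nonneg hca hcb) (sq_nonneg _)
      have t2 : 0 ≤ ca * ca * (X1 - X3) ^ 2 := mul_nonneg (mul_nonneg hca hca) (sq_nonneg _)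
      have t3 : 0 ≤ ca * cb * (X1 - X4) ^ 2 := mul_nonneg (mul_nonneg hca hcb) (sq_nonneg _)
      have t4 : 0 ≤ cb * ca * (X2 - X3) ^ 2 := mul_nonneg (mul_nonneg hcb hca) (sq_nonneg _)
      have t5 : 0 ≤ cb * cb * (X2 - X4) ^ 2 := mul_nonneg (mul_nonneg hcb hcb) (sq_nonneg _)
      have t6 : 0 ≤ ca * cb * (X3 - X4) ^ 2 := mul_nonneg (mul_nonneg hca hcb) (sq_nonneg _)
      linarith [hB2]
    · rw [sabraB, if_neg hn]
      simp only [norm_zero]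
      have : (0:ℝ) ^ 2 = 0 := by norm_num
      rw [this]
      exact mul_nonneg hCnn (hRnn n)
  have e1 := key ca hca 1 2
  have e2 := key cb hcb (-1) 1
  have e3 := key ca hca (-1) (-2)
  have e4 := key cb hcb (-2) (-1)
  have hRsum : Summable R := (e1.1.add e2.1).add (e3.1.add e4.1)
  have hBsum : Summable (fun n : ℤ => ‖sabraB a b k0 lam u v n‖ ^ 2) :=
    Summable.of_nonneg_of_le (fun n => sq_nonneg _) hpt (hRsum.mul_left C)
  refine ⟨hBsum, ?_⟩
  have hRle : ∑' n, R n ≤ C * (M * U) := by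
    have heq : ∑' n, R n = (∑' n, ca * (g (n + 1) * h (n + 2))
        + ∑' n, cb * (g (n + (-1)) * h (n + 1)))
        + (∑' n, ca * (g (n + (-1)) * h (n + (-2)))
        + ∑' n, cb * (g (n + (-2)) * h (n + (-1)))) := by
      rw [hRdef]
      rw [Summable.tsum_add (e1.1.add e2.1) (e3.1.add e4.1), Summable.tsum_add e1.1 e2.1, Summable.tsum_add e3.1 e4.1]
    rw [heq]
    have hfin : ca * M * U + cb * M * U + (ca * M * U + cb * M * U) = C * (M * U) := by
      rw [hCc]; ring
    linarith [e1.2, e2.2, e3.2, e4.2]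
  have hS : ∑' n : ℤ, ‖sabraB a b k0 lam u v n‖ ^ 2 ≤ C * (C * (M * U)) := by
    calc ∑' n : ℤ, ‖sabraB a b k0 lam u v n‖ ^ 2 ≤ ∑' n, C * R n :=
          Summable.tsum_le_tsum hpt hBsum (hRsum.mul_left C)
      _ = C * ∑' n, R n := tsum_mul_left
      _ ≤ C * (C * (M * U)) := mul_le_mul_of_nonneg_left hRle hCnn
  calc Real.sqrt (∑' n : ℤ, ‖sabraB a b k0 lam u v n‖ ^ 2)
      ≤ Real.sqrt (C * (C * (M * U))) := Real.sqrt_le_sqrt hS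
    _ = C * Real.sqrt M * Real.sqrt U := by
        rw [show C * (C * (M * U)) = (C * Real.sqrt M * Real.sqrt U) ^ 2 by
          rw [mul_pow, mul_pow, Real.sq_sqrt hMnn, Real.sq_sqrt hUnn]; ring]
        exact Real.sqrt_sq (by positivity)
end

section
/- For u ∈ H and v ∈ D(A), ‖B(u,v)‖_V ≤ C₃ |u| |Av| with C₃ = |a|(λ³+λ^{-3}) + |b|(λ+λ^{-2}). -/
/-!
Since `kₘ kₙ = λ^(m+n-2p) k_p²`, each of the four terms of `kₙ B(u,v)ₙ` is bounded by a constant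
(`λ⁻³|a|`, `λ⁻²|b|`, `λ³|a|`, `λ|b|`) times `|u_{n+s}| k_{n+t}² |v_{n+t}|` for fixed shifts `s`, `t`.
Bounding `|u_{n+s}|` by `|u|` and using the translation invariance of the `ℓ²` norm, the `ℓ²` norm
of each term is at most its constant times `|u| |Av|`, and Minkowski's inequality in `ℓ²` adds
the four constants up to `C₃`.
-/

open scoped BigOperators

section SquareSummable

variable {ι : Type*} {E : ι → Type*} [∀ i, NormedAddCommGroup (E i)]

theorem memℓp_two_iff_summable_sq_norm (f : ∀ i, E i) :
    Memℓp f 2 ↔ Summable fun i => ‖f i‖ ^ 2 := by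
  rw [memℓp_gen_iff (by norm_num)]
  norm_num

theorem lp.norm_two_eq_sqrt_tsum (f : lp E 2) : ‖f‖ = √(∑' i, ‖f i‖ ^ 2) := by
  rw [← Real.sqrt_sq (norm_nonneg f)]
  congr 1
  simpa using lp.norm_rpow_eq_tsum (p := 2) (by norm_num) f

theorem norm_le_sqrt_tsum_sq_norm {u : ∀ i, E i} (hu : Summable fun i => ‖u i‖ ^ 2) (i : ι) :
    ‖u i‖ ≤ √(∑' i, ‖u i‖ ^ 2) :=
  Real.le_sqrt_of_sq_le (hu.le_tsum i fun _ _ => sq_nonneg _)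

end SquareSummable

section ShiftedProducts

variable {ι J E F G : Type*} [AddGroup ι]
  [NormedAddCommGroup E] [NormedAddCommGroup F] [NormedAddCommGroup G]

theorem sq_norm_mul_norm {C : ℝ} (hC : 0 ≤ C) (x : F) : ‖C * ‖x‖‖ ^ 2 = C ^ 2 * ‖x‖ ^ 2 := by
  rw [norm_mul, norm_norm, Real.norm_of_nonneg hC, mul_pow]

theorem Summable.sq_norm_mul_norm_comp_add_right {w : ι → F}
    (hw : Summable fun i => ‖w i‖ ^ 2) {C : ℝ} (hC : 0 ≤ C) (t : ι) :
    Summable fun i => ‖C * ‖w (i + t)‖‖ ^ 2 := by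
  have hshift : Summable fun i => ‖w (i + t)‖ ^ 2 :=
    (Equiv.addRight t).summable_iff (f := fun i => ‖w i‖ ^ 2) |>.2 hw
  simpa only [sq_norm_mul_norm hC] using hshift.mul_left (C ^ 2)

theorem sqrt_tsum_sq_norm_mul_norm_comp_add_right {C : ℝ} (hC : 0 ≤ C) (w : ι → F) (t : ι) :
    √(∑' i, ‖C * ‖w (i + t)‖‖ ^ 2) = C * √(∑' i, ‖w i‖ ^ 2) := by
  have hshift : ∑' i, ‖w (i + t)‖ ^ 2 = ∑' i, ‖w i‖ ^ 2 :=
    (Equiv.addRight t).tsum_eq fun i => ‖w i‖ ^ 2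
  rw [tsum_congr fun i => sq_norm_mul_norm hC (w (i + t)), tsum_mul_left, hshift,
    Real.sqrt_mul (sq_nonneg C), Real.sqrt_sq hC]

theorem summable_and_sqrt_tsum_le_of_le_sum_shifts (s : Finset J) {c : J → ℝ}
    (hc : ∀ j, 0 ≤ c j) (σ τ : J → ι) {u : ι → E} {w : ι → F} {f : ι → G}
    (hu : Summable fun i => ‖u i‖ ^ 2) (hw : Summable fun i => ‖w i‖ ^ 2)
    (hf : ∀ i, ‖f i‖ ≤ ∑ j ∈ s, c j * ‖u (i + σ j)‖ * ‖w (i + τ j)‖) :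
    (Summable fun i => ‖f i‖ ^ 2) ∧
      √(∑' i, ‖f i‖ ^ 2) ≤ (∑ j ∈ s, c j) * √(∑' i, ‖u i‖ ^ 2) * √(∑' i, ‖w i‖ ^ 2) := by
  set Nu := √(∑' i, ‖u i‖ ^ 2)
  have hC : ∀ j, 0 ≤ c j * Nu := fun j => mul_nonneg (hc j) (Real.sqrt_nonneg _)
  let term (j : J) : lp (fun _ : ι => ℝ) 2 :=
    ⟨fun i => c j * Nu * ‖w (i + τ j)‖,
      (memℓp_two_iff_summable_sq_norm _).2 (hw.sq_norm_mul_norm_comp_add_right (hC j) (τ j))⟩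
  let g := ∑ j ∈ s, term j
  have hfg : ∀ i, ‖f i‖ ≤ ‖g i‖ := fun i => by
    have hgi : g i = ∑ j ∈ s, c j * Nu * ‖w (i + τ j)‖ := by
      simp only [g, lp.coeFn_sum, Finset.sum_apply]
      rfl
    rw [hgi, Real.norm_of_nonneg (Finset.sum_nonneg fun j _ => mul_nonneg (hC j) (norm_nonneg _))]
    refine (hf i).trans (Finset.sum_le_sum fun j _ => ?_)
    gcongr
    · exact hc j
    · exact norm_le_sqrt_tsum_sq_norm hu _
  have hmem : Memℓp f 2 := g.2.mono' hfg
  have hg : ‖g‖ ≤ (∑ j ∈ s, c j) * Nu * √(∑' i, ‖w i‖ ^ 2) := by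
    refine (norm_sum_le _ _).trans_eq ?_
    simp only [Finset.sum_mul]
    refine Finset.sum_congr rfl fun j _ => ?_
    rw [lp.norm_two_eq_sqrt_tsum]
    exact sqrt_tsum_sq_norm_mul_norm_comp_add_right (hC j) w (τ j)
  refine ⟨(memℓp_two_iff_summable_sq_norm f).1 hmem, ?_⟩
  rw [← lp.norm_two_eq_sqrt_tsum ⟨f, hmem⟩]
  exact (lp.norm_mono two_ne_zero hfg).trans hg

end ShiftedProducts

section Sabra

variable {k0 lam : ℝ}

theorem abs_kk_mul_abs_kk (hlam : 0 < lam) (m n p : ℤ) :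
    |kk k0 lam m| * |kk k0 lam n| = lam ^ (m + n - 2 * p) * kk k0 lam p ^ 2 := by
  have hpow : lam ^ m * lam ^ n = lam ^ (m + n - 2 * p) * lam ^ p * lam ^ p := by
    simp only [← zpow_add₀ hlam.ne']
    ring_nf
  simp only [kk, abs_mul, abs_of_pos (zpow_pos hlam _)]
  linear_combination |k0| ^ 2 * hpow + lam ^ (m + n - 2 * p) * lam ^ p * lam ^ p * sq_abs k0

theorem abs_kk_mul_norm_sabraB_le (a b k0 : ℝ) (hlam : 0 < lam) (u v : ℤ → ℂ) (n : ℤ) :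
    |kk k0 lam n| * ‖sabraB a b k0 lam u v n‖ ≤
      |a| * (lam ^ 3)⁻¹ * ‖u (n + 1)‖ * (kk k0 lam (n + 2) ^ 2 * ‖v (n + 2)‖)
        + |b| * (lam ^ 2)⁻¹ * ‖u (n - 1)‖ * (kk k0 lam (n + 1) ^ 2 * ‖v (n + 1)‖)
        + |a| * lam ^ 3 * ‖u (n - 1)‖ * (kk k0 lam (n - 2) ^ 2 * ‖v (n - 2)‖)
        + |b| * lam * ‖u (n - 2)‖ * (kk k0 lam (n - 1) ^ 2 * ‖v (n - 1)‖) := by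
  by_cases hn : 1 ≤ n
  swap
  · rw [sabraB, if_neg hn, norm_zero, mul_zero]
    positivity
  have h1 : |kk k0 lam n| * |kk k0 lam (n + 1)| = (lam ^ 3)⁻¹ * kk k0 lam (n + 2) ^ 2 := by
    rw [abs_kk_mul_abs_kk hlam _ _ (n + 2), show n + (n + 1) - 2 * (n + 2) = -3 by ring,
      zpow_neg, zpow_ofNat]
  have h2 : |kk k0 lam n| * |kk k0 lam n| = (lam ^ 2)⁻¹ * kk k0 lam (n + 1) ^ 2 := by
    rw [abs_kk_mul_abs_kk hlam _ _ (n + 1), show n + n - 2 * (n + 1) = -2 by ring,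
      zpow_neg, zpow_ofNat]
  have h3 : |kk k0 lam n| * |kk k0 lam (n - 1)| = lam ^ 3 * kk k0 lam (n - 2) ^ 2 := by
    rw [abs_kk_mul_abs_kk hlam _ _ (n - 2), show n + (n - 1) - 2 * (n - 2) = 3 by ring, zpow_ofNat]
  have h4 : |kk k0 lam n| * |kk k0 lam (n - 1)| = lam * kk k0 lam (n - 1) ^ 2 := by
    rw [abs_kk_mul_abs_kk hlam _ _ (n - 1), show n + (n - 1) - 2 * (n - 1) = 1 by ring, zpow_one]
  rw [sabraB, if_pos hn, norm_mul, norm_neg, Complex.norm_I, one_mul]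
  refine (mul_le_mul_of_nonneg_left norm_add₄_le (abs_nonneg _)).trans_eq ?_
  simp only [norm_mul, Complex.norm_real, Real.norm_eq_abs, Complex.norm_conj]
  linear_combination |a| * ‖v (n + 2)‖ * ‖u (n + 1)‖ * h1 + |b| * ‖v (n + 1)‖ * ‖u (n - 1)‖ * h2
    + |a| * ‖u (n - 1)‖ * ‖v (n - 2)‖ * h3 + |b| * ‖v (n - 1)‖ * ‖u (n - 2)‖ * h4

end Sabra

theorem sabraB_H_DA_bound_general (a b k0 lam : ℝ) (hlam : 1 < lam)
    (u v : ℤ → ℂ)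
    (hu : Summable fun n : ℤ => ‖u n‖ ^ 2)
    (hv : Summable fun n : ℤ => (kk k0 lam n) ^ 4 * ‖v n‖ ^ 2) :
    Summable (fun n : ℤ => (kk k0 lam n) ^ 2 * ‖sabraB a b k0 lam u v n‖ ^ 2) ∧
      Real.sqrt (∑' n : ℤ, (kk k0 lam n) ^ 2 * ‖sabraB a b k0 lam u v n‖ ^ 2) ≤
        (|a| * (lam ^ 3 + (lam ^ 3)⁻¹) + |b| * (lam + (lam ^ 2)⁻¹)) *
          Real.sqrt (∑' n : ℤ, ‖u n‖ ^ 2) *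
          Real.sqrt (∑' n : ℤ, (kk k0 lam n) ^ 4 * ‖v n‖ ^ 2) := by
  have hlam0 : 0 < lam := zero_lt_one.trans hlam
  have hAv : ∀ n, ‖kk k0 lam n ^ 2 * ‖v n‖‖ ^ 2 = kk k0 lam n ^ 4 * ‖v n‖ ^ 2 := fun n => by
    rw [sq_norm_mul_norm (sq_nonneg _)]
    ring
  have hB : ∀ n, ‖kk k0 lam n * ‖sabraB a b k0 lam u v n‖‖ ^ 2 =
      kk k0 lam n ^ 2 * ‖sabraB a b k0 lam u v n‖ ^ 2 := fun n => by
    rw [norm_mul, norm_norm, Real.norm_eq_abs, mul_pow, sq_abs]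
  set c : Fin 4 → ℝ := ![|a| * (lam ^ 3)⁻¹, |b| * (lam ^ 2)⁻¹, |a| * lam ^ 3, |b| * lam]
  have hC : ∑ j, c j = |a| * (lam ^ 3 + (lam ^ 3)⁻¹) + |b| * (lam + (lam ^ 2)⁻¹) := by
    simp only [c, Fin.sum_univ_four, Fin.isValue, Matrix.cons_val_zero, Matrix.cons_val_one,
      Matrix.cons_val]
    ring
  have hc : ∀ j, 0 ≤ c j := fun j => by
    fin_cases j <;>
      simp only [c, Fin.zero_eta, Fin.mk_one, Fin.reduceFinMk, Matrix.cons_val_zero,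
        Matrix.cons_val_one, Matrix.cons_val] <;>
      positivity
  have key := summable_and_sqrt_tsum_le_of_le_sum_shifts Finset.univ hc
    ![1, -1, -1, -2] ![2, 1, -2, -1] hu
    (w := fun n => kk k0 lam n ^ 2 * ‖v n‖) (by simpa only [hAv] using hv)
    (f := fun n => kk k0 lam n * ‖sabraB a b k0 lam u v n‖) fun n => by
      simpa [c, Fin.sum_univ_four, ← sub_eq_add_neg, mul_assoc] using
        abs_kk_mul_norm_sabraB_le a b k0 hlam0 u v n
  simpa only [hAv, hB, hC] using key

/-- for `u ∈ H`, `v ∈ D(A)`, `‖B(u,v)‖_V ≤ C₃ |u| |Av|` with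
`C₃ = |a|(λ³+λ⁻³) + |b|(λ+λ⁻²)`, where `|Av|² = Σ kₙ⁴|vₙ|²` and `‖f‖_V² = Σ kₙ²|fₙ|²`. -/
theorem sabraB_H_DA_bound (a b k0 lam : ℝ) (hk0 : 0 < k0) (hlam : 1 < lam)
    (u v : ℤ → ℂ) (hu0 : ∀ n : ℤ, n ≤ 0 → u n = 0) (hv0 : ∀ n : ℤ, n ≤ 0 → v n = 0)
    (hu : Summable fun n : ℤ => ‖u n‖ ^ 2)
    (hv : Summable fun n : ℤ => (kk k0 lam n) ^ 4 * ‖v n‖ ^ 2) :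
    Summable (fun n : ℤ => (kk k0 lam n) ^ 2 * ‖sabraB a b k0 lam u v n‖ ^ 2) ∧
      Real.sqrt (∑' n : ℤ, (kk k0 lam n) ^ 2 * ‖sabraB a b k0 lam u v n‖ ^ 2) ≤
        (|a| * (lam ^ 3 + (lam ^ 3)⁻¹) + |b| * (lam + (lam ^ 2)⁻¹)) *
          Real.sqrt (∑' n : ℤ, ‖u n‖ ^ 2) *
          Real.sqrt (∑' n : ℤ, (kk k0 lam n) ^ 4 * ‖v n‖ ^ 2) :=
  sabraB_H_DA_bound_general a b k0 lam hlam u v hu hv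
end

section
/- Let ℛ ∈ ℒ(H) be self-adjoint and satisfy the algebraic Riccati equation 𝒜*ℛ + ℛ𝒜 + ℛB₁B₁*ℛ − (1/γ)ℛB₂B₂*ℛ − I = 0 with γ > 0. Then along any solution of u' + 𝒜u + B₁B₁*ℛu = B₂w, one has (ℛu(0), u(0)) + γ∫₀^∞|w|² dt ≥ ∫₀^∞ |u|² dt + ∫₀^∞ |B₁*ℛu|² dt, i.e. the closed-loop system achieves L² gain at most γ from the disturbance w to the output (u, B₁*ℛu). -/
/-!
Along the closed loop, the storage function `V = (ℛu, u)` satisfies the dissipation inequality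
`V' ≤ γ|w|² − |u|² − |B₁*ℛu|²`: the Riccati equation evaluates `2 Re (ℛu, 𝒜u)`, and the only
cross term left, `2 Re (B₂*ℛu, w)`, is absorbed by completing the square
`γ|w − (1/γ)B₂*ℛu|² ≥ 0`. Integrating over `[0, T]` and letting `T → ∞` with `V(T) → 0` gives the
`L²` gain bound.
-/

open MeasureTheory ContinuousLinearMap Filter
open scoped ComplexInnerProductSpace

section

open RCLike
open scoped InnerProductSpace

variable {𝕜 E : Type*} [RCLike 𝕜] [NormedAddCommGroup E] [InnerProductSpace 𝕜 E]

theorem two_mul_re_inner_le (x y : E) {γ : ℝ} (hγ : 0 < γ) :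
    2 * re ⟪x, y⟫_𝕜 ≤ γ⁻¹ * ‖x‖ ^ 2 + γ * ‖y‖ ^ 2 := by
  have hsq : 0 ≤ ‖x - (γ : 𝕜) • y‖ ^ 2 := by positivity
  rw [norm_sub_sq (𝕜 := 𝕜), inner_smul_real_right, norm_smul, RCLike.norm_ofReal, abs_of_pos hγ,
    real_smul_eq_coe_mul, re_ofReal_mul] at hsq
  calc 2 * re ⟪x, y⟫_𝕜 = γ⁻¹ * (2 * (γ * re ⟪x, y⟫_𝕜)) := by field_simp
    _ ≤ γ⁻¹ * (‖x‖ ^ 2 + (γ * ‖y‖) ^ 2) := by gcongr; linarith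
    _ = γ⁻¹ * ‖x‖ ^ 2 + γ * ‖y‖ ^ 2 := by field_simp

theorem HasDerivAt.re_inner_apply_self [CompleteSpace E] [NormedSpace ℝ E] [IsScalarTower ℝ 𝕜 E]
    {R : E →L[𝕜] E} (hR : IsSelfAdjoint R) {u : ℝ → E} {u' : E} {t : ℝ}
    (hu : HasDerivAt u u' t) :
    HasDerivAt (fun s => re ⟪R (u s), u s⟫_𝕜) (2 * re ⟪R (u t), u'⟫_𝕜) t := by
  have hRu : HasDerivAt (fun s => R (u s)) (R u') t :=
    (R.restrictScalars ℝ).hasFDerivAt.comp_hasDerivAt t hu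
  refine (reCLM.hasFDerivAt.comp_hasDerivAt t (hRu.inner 𝕜 hu)).congr_deriv ?_
  have hRs : ∀ x y, ⟪R x, y⟫_𝕜 = ⟪x, R y⟫_𝕜 := hR.isSymmetric
  rw [reCLM_apply, map_add, hRs u', inner_re_symm (𝕜 := 𝕜) u']
  ring

end

theorem sub_le_integral_Ioi_of_hasDerivAt_of_le {V V' g : ℝ → ℝ} {a L : ℝ}
    (hV : ∀ t, HasDerivAt V (V' t) t) (hV'g : ∀ t, V' t ≤ g t) (hg : IntegrableOn g (Set.Ioi a))
    (hVL : Tendsto V atTop (nhds L)) : L - V a ≤ ∫ t in Set.Ioi a, g t := by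
  have hcont : Continuous V := continuous_iff_continuousAt.mpr fun t => (hV t).continuousAt
  refine le_of_tendsto_of_tendsto (hVL.sub_const (V a))
    (intervalIntegral_tendsto_integral_Ioi a hg tendsto_id) ?_
  filter_upwards [eventually_ge_atTop a] with T hT
  refine intervalIntegral.sub_le_integral_of_hasDeriv_right_of_le hT hcont.continuousOn
    (fun t _ => (hV t).hasDerivWithinAt) ?_ (fun t _ => hV'g t)
  rw [integrableOn_Icc_iff_integrableOn_Ioc]
  exact hg.mono_set Set.Ioc_subset_Ioi_self

section Riccati

variable {H : Type*} [NormedAddCommGroup H] [InnerProductSpace ℂ H] [CompleteSpace H]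

def IsRiccatiSolution (A B₁ B₂ R : H →L[ℂ] H) (γ : ℝ) : Prop :=
  adjoint A ∘L R + R ∘L A + R ∘L B₁ ∘L adjoint B₁ ∘L R
    - (1 / γ : ℂ) • (R ∘L B₂ ∘L adjoint B₂ ∘L R) - ContinuousLinearMap.id ℂ H = 0

variable {A B₁ B₂ R : H →L[ℂ] H} {γ : ℝ}

theorem IsRiccatiSolution.two_mul_re_inner_apply (hric : IsRiccatiSolution A B₁ B₂ R γ)
    (hR : IsSelfAdjoint R) (v : H) :
    2 * (⟪R v, A v⟫).re
      = ‖v‖ ^ 2 + γ⁻¹ * ‖adjoint B₂ (R v)‖ ^ 2 - ‖adjoint B₁ (R v)‖ ^ 2 := by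
  have h := congrArg (fun T : H →L[ℂ] H => (⟪T v, v⟫).re) hric
  simp only [add_apply, sub_apply, smul_apply, coe_comp, Function.comp_apply, id_apply,
    zero_apply, inner_zero_left, inner_add_left, inner_sub_left, inner_smul_left,
    adjoint_inner_left, Complex.add_re, Complex.sub_re, Complex.zero_re] at h
  have hRs : ∀ x y, ⟪R x, y⟫ = ⟪x, R y⟫ := hR.isSymmetric
  have hc : (starRingEnd ℂ) (1 / (γ : ℂ)) = ((γ⁻¹ : ℝ) : ℂ) := by simp
  rw [hRs (A v), hRs (B₁ _), hRs (B₂ _), ← adjoint_inner_right B₁, ← adjoint_inner_right B₂,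
    ← inner_conj_symm (A v), Complex.conj_re, hc, Complex.re_ofReal_mul] at h
  simp only [← inner_self_eq_norm_sq (𝕜 := ℂ), RCLike.re_to_complex]
  linarith

theorem IsRiccatiSolution.two_mul_re_inner_closedLoop_le (hric : IsRiccatiSolution A B₁ B₂ R γ)
    (hR : IsSelfAdjoint R) (hγ : 0 < γ) (v w : H) :
    2 * (⟪R v, -(A v) - B₁ (adjoint B₁ (R v)) + B₂ w⟫).re
      ≤ γ * ‖w‖ ^ 2 - ‖v‖ ^ 2 - ‖adjoint B₁ (R v)‖ ^ 2 := by
  rw [inner_add_right, inner_sub_right, inner_neg_right, ← adjoint_inner_left B₁,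
    ← adjoint_inner_left B₂]
  have hy : (⟪adjoint B₁ (R v), adjoint B₁ (R v)⟫).re = ‖adjoint B₁ (R v)‖ ^ 2 :=
    inner_self_eq_norm_sq (𝕜 := ℂ) _
  have hA := hric.two_mul_re_inner_apply hR v
  have hw := two_mul_re_inner_le (𝕜 := ℂ) (adjoint B₂ (R v)) w hγ
  simp only [Complex.add_re, Complex.sub_re, Complex.neg_re, RCLike.re_to_complex] at hw ⊢
  linarith

end Riccati

/-- if `ℛ` is a bounded self-adjoint solution of the algebraic Riccati
equation `𝒜*ℛ + ℛ𝒜 + ℛB₁B₁*ℛ − (1/γ)ℛB₂B₂*ℛ − I = 0` (`γ > 0`), then along any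
solution of `u' + 𝒜u + B₁B₁*ℛu = B₂w` with `(ℛu(T), u(T)) → 0`, the closed loop
achieves `L²` gain at most `γ`:
`∫₀^∞ |u|² + ∫₀^∞ |B₁*ℛu|² ≤ (ℛu(0), u(0)) + γ ∫₀^∞ |w|²`. -/
theorem riccati_L2_gain
    {H : Type*} [NormedAddCommGroup H] [InnerProductSpace ℂ H] [CompleteSpace H]
    (A B₁ B₂ R : H →L[ℂ] H) (γ : ℝ) (hγ : 0 < γ) (hsa : IsSelfAdjoint R)
    (hric : adjoint A ∘L R + R ∘L A + R ∘L B₁ ∘L adjoint B₁ ∘L R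
        - (1 / γ : ℂ) • (R ∘L B₂ ∘L adjoint B₂ ∘L R) - ContinuousLinearMap.id ℂ H = 0)
    (w u : ℝ → H)
    (hu : ∀ t : ℝ,
      HasDerivAt u (-(A (u t)) - B₁ ((adjoint B₁) (R (u t))) + B₂ (w t)) t)
    (hw : IntegrableOn (fun t => ‖w t‖ ^ 2) (Set.Ioi (0:ℝ)))
    (hui : IntegrableOn (fun t => ‖u t‖ ^ 2) (Set.Ioi (0:ℝ)))
    (hBi : IntegrableOn (fun t => ‖(adjoint B₁) (R (u t))‖ ^ 2) (Set.Ioi (0:ℝ)))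
    (hlim : Tendsto (fun T : ℝ => (⟪R (u T), u T⟫).re) atTop (nhds 0)) :
    (∫ t in Set.Ioi (0:ℝ), ‖u t‖ ^ 2) + ∫ t in Set.Ioi (0:ℝ), ‖(adjoint B₁) (R (u t))‖ ^ 2
      ≤ (⟪R (u 0), u 0⟫).re + γ * ∫ t in Set.Ioi (0:ℝ), ‖w t‖ ^ 2 := by
  have hric : IsRiccatiSolution A B₁ B₂ R γ := hric
  have hwu : IntegrableOn (fun t => γ * ‖w t‖ ^ 2 - ‖u t‖ ^ 2) (Set.Ioi 0) :=
    (hw.const_mul γ).sub hui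
  have hgain := sub_le_integral_Ioi_of_hasDerivAt_of_le (fun t => (hu t).re_inner_apply_self hsa)
    (fun t => hric.two_mul_re_inner_closedLoop_le hsa hγ (u t) (w t)) (hwu.sub hBi) hlim
  rw [integral_sub hwu hBi, integral_sub (hw.const_mul γ) hui, integral_const_mul,
    RCLike.re_to_complex] at hgain
  linarith
end

section
/- Let X = L^∞(0,∞;H) ∩ L²(0,∞;V) and Σ_κ = {u ∈ X : ‖u‖_{L^∞(0,∞;H)} ≤ κ, ‖u‖_{L²(0,∞;V)} ≤ κ}. Suppose B satisfies |B(u) − B(v)|_{L²(0,∞;H)} ≤ C₁(‖u‖_X + ‖v‖_X)‖u − v‖_X and Υ: L²(0,∞;H) → X is Lipschitz with constant C and Υ(0) bounded by C(|u⁰| + ‖w‖_{L²}). If κ < 1/(2CC₁) and |u⁰| + ‖w‖_{L²(0,∞;H)} ≤ κ/(2C), then the map Λ(u) = Υ(−B(u)) maps Σ_κ into itself and is a contraction on Σ_κ, hence has a unique fixed point in Σ_κ. -/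
/-- with `X = L^∞(0,∞;H) ∩ L²(0,∞;V)` (norm `‖·‖_X` the max of the two
norms, so `Σ_κ` is the closed ball of radius `κ`), `B` quadratic with
`‖B(u) − B(v)‖ ≤ C₁(‖u‖_X + ‖v‖_X)‖u − v‖_X`, `Υ` C-Lipschitz with
`‖Υ(0)‖ ≤ C(|u⁰| + ‖w‖_{L²}) = Cρ`: if `κ < 1/(2CC₁)` and `ρ ≤ κ/(2C)`, then
`Λ(u) = Υ(−B(u))` maps `Σ_κ` into itself and is a contraction there, hence has a
unique fixed point in `Σ_κ`. -/
theorem contraction_fixed_point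
    {X F : Type*} [NormedAddCommGroup X] [NormedSpace ℝ X] [CompleteSpace X]
    [NormedAddCommGroup F] [NormedSpace ℝ F]
    (B : X → F) (Υ : F → X) (C C₁ κ ρ : ℝ)
    (hC : 0 < C) (hC₁ : 0 < C₁)
    (hB0 : B 0 = 0)
    (hB : ∀ u v : X, ‖B u - B v‖ ≤ C₁ * (‖u‖ + ‖v‖) * ‖u - v‖)
    (hΥ : ∀ f g : F, ‖Υ f - Υ g‖ ≤ C * ‖f - g‖)
    (hΥ0 : ‖Υ 0‖ ≤ C * ρ)
    (hκpos : 0 < κ) (hκ : κ < 1 / (2 * C * C₁)) (hρ : ρ ≤ κ / (2 * C)) :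
    (∀ u : X, ‖u‖ ≤ κ → ‖Υ (-(B u))‖ ≤ κ) ∧
    (∀ u v : X, ‖u‖ ≤ κ → ‖v‖ ≤ κ →
      ‖Υ (-(B u)) - Υ (-(B v))‖ ≤ (2 * C * C₁ * κ) * ‖u - v‖) ∧
    2 * C * C₁ * κ < 1 ∧
    (∃! u : X, ‖u‖ ≤ κ ∧ Υ (-(B u)) = u) := by
  have hCC₁ : 0 < 2 * C * C₁ := by positivity
  have hκ1 : 2 * C * C₁ * κ < 1 := by
    rw [lt_div_iff₀ hCC₁] at hκ
    linarith [hκ]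
  -- self-map bound
  have hmap : ∀ u : X, ‖u‖ ≤ κ → ‖Υ (-(B u))‖ ≤ κ := by
    intro u hu
    have hBu : ‖B u‖ ≤ C₁ * κ * κ := by
      have := hB u 0
      rw [hB0, sub_zero, sub_zero, norm_zero, add_zero] at this
      calc ‖B u‖ ≤ C₁ * ‖u‖ * ‖u‖ := this
        _ ≤ C₁ * κ * κ := by
            have h0 : (0:ℝ) ≤ ‖u‖ := norm_nonneg _
            nlinarith [mul_le_mul hu hu h0 hκpos.le]
    have h1 : ‖Υ (-(B u)) - Υ 0‖ ≤ C * ‖B u‖ := by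
      have := hΥ (-(B u)) 0
      simpa using this
    have : ‖Υ (-(B u))‖ ≤ C * ‖B u‖ + ‖Υ 0‖ := by
      calc ‖Υ (-(B u))‖ = ‖(Υ (-(B u)) - Υ 0) + Υ 0‖ := by
            congr 1; abel
        _ ≤ ‖Υ (-(B u)) - Υ 0‖ + ‖Υ 0‖ := norm_add_le _ _
        _ ≤ C * ‖B u‖ + ‖Υ 0‖ := by linarith
    have hρ' : C * ρ ≤ κ / 2 := by
      have h := mul_le_mul_of_nonneg_left hρ hC.le
      have : C * (κ / (2 * C)) = κ / 2 := by
        field_simp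
      linarith
    have : ‖Υ (-(B u))‖ ≤ C * (C₁ * κ * κ) + κ / 2 := by
      nlinarith [hΥ0]
    nlinarith [this]
  -- contraction estimate
  have hcontr : ∀ u v : X, ‖u‖ ≤ κ → ‖v‖ ≤ κ →
      ‖Υ (-(B u)) - Υ (-(B v))‖ ≤ (2 * C * C₁ * κ) * ‖u - v‖ := by
    intro u v hu hv
    have h1 : ‖Υ (-(B u)) - Υ (-(B v))‖ ≤ C * ‖B u - B v‖ := by
      have := hΥ (-(B u)) (-(B v))
      have e : -(B u) - -(B v) = -(B u - B v) := by abel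
      rw [e, norm_neg] at this
      exact this
    have h2 : ‖B u - B v‖ ≤ C₁ * (‖u‖ + ‖v‖) * ‖u - v‖ := hB u v
    have h3 : C₁ * (‖u‖ + ‖v‖) * ‖u - v‖ ≤ C₁ * (2 * κ) * ‖u - v‖ := by
      have h4 : ‖u‖ + ‖v‖ ≤ 2 * κ := by linarith
      have := norm_nonneg (u - v)
      nlinarith [mul_le_mul_of_nonneg_right h4 this]
    calc ‖Υ (-(B u)) - Υ (-(B v))‖ ≤ C * ‖B u - B v‖ := h1
      _ ≤ C * (C₁ * (2 * κ) * ‖u - v‖) := by nlinarith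
      _ = (2 * C * C₁ * κ) * ‖u - v‖ := by ring
  refine ⟨hmap, hcontr, hκ1, ?_⟩
  -- fixed point via Banach on the closed ball
  set s : Set X := Metric.closedBall (0 : X) κ with hs
  have hmem : ∀ u : X, u ∈ s ↔ ‖u‖ ≤ κ := by
    intro u; simp [hs, Metric.mem_closedBall, dist_zero_right]
  haveI : CompleteSpace s := (Metric.isClosed_closedBall).completeSpace_coe
  set K : NNReal := ⟨2 * C * C₁ * κ, by positivity⟩ with hK
  have hKlt : K < 1 := by
    rw [← NNReal.coe_lt_coe]
    exact hκ1
  set f : s → s := fun u => ⟨Υ (-(B u.1)), (hmem _).2 (hmap u.1 ((hmem _).1 u.2))⟩ with hf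
  have hlip : LipschitzWith K f := by
    intro u v
    rw [edist_dist, edist_dist]
    have hd : dist (f u) (f v) = ‖Υ (-(B u.1)) - Υ (-(B v.1))‖ := by
      simp [hf, Subtype.dist_eq, dist_eq_norm]
    have hd2 : dist u v = ‖u.1 - v.1‖ := by
      simp [Subtype.dist_eq, dist_eq_norm]
    have hbd : dist (f u) (f v) ≤ (K : ℝ) * dist u v := by
      rw [hd, hd2]
      exact hcontr u.1 v.1 ((hmem _).1 u.2) ((hmem _).1 v.2)
    calc ENNReal.ofReal (dist (f u) (f v)) ≤ ENNReal.ofReal ((K : ℝ) * dist u v) :=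
          ENNReal.ofReal_le_ofReal hbd
      _ = (K : ENNReal) * ENNReal.ofReal (dist u v) := by
          rw [ENNReal.ofReal_mul (by positivity)]
          simp
  have hcw : ContractingWith K f := ⟨hKlt, hlip⟩
  haveI : Nonempty s := ⟨⟨0, by simp [hs, Metric.mem_closedBall]; exact hκpos.le⟩⟩
  set y : s := ContractingWith.fixedPoint f hcw with hy
  have hyfix : f y = y := hcw.fixedPoint_isFixedPt
  refine ⟨y.1, ⟨(hmem _).1 y.2, congrArg Subtype.val hyfix⟩, ?_⟩
  rintro u ⟨hu, hfix⟩
  have hu' : Function.IsFixedPt f ⟨u, (hmem _).2 hu⟩ := Subtype.ext hfix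
  have := hcw.fixedPoint_unique hu'
  exact congrArg Subtype.val this
end
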